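/- df-stable models equal F-stable models: a valuation t is a df-stable model of a theory Γ (i.e., ⟨t,t⟩ ⊨_df Γ and no h ⊂ t has ⟨h,t⟩ ⊨_df Γ) if and only if t is a ⊆-minimal classical model of the reduct Γ^t = {φ^t : φ ∈ Γ}. -/
import Mathlib


open Classical

/-- Valuations; `none` stands for undefined. -/
abbrev Val (X D : Type) := X → Option D

/-- `v ⊆ v'` on valuations. -/
def Val.le {X D : Type} (v v' : Val X D) : Prop :=
  ∀ x d, v x = some d → v' x = some d

/-- Formulas over a type `C` of atoms. -/
inductive Form (C : Type) : Type
  | bot : Form C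
  | atom : C → Form C
  | and : Form C → Form C → Form C
  | or : Form C → Form C → Form C
  | imp : Form C → Form C → Form C

/-- Generic HT_C satisfaction, given a denotation of basic atoms `C0` and an
evaluation of atoms `C` into basic atoms relative to an interpretation. -/
def sat {X D C C0 : Type} (den : C0 → Set (Val X D))
    (eval : Val X D → Val X D → C → C0) :
    Val X D → Val X D → Form C → Prop
  | _, _, .bot => False
  | h, t, .atom c => h ∈ den (eval h t c) ∧ t ∈ den (eval t t c)
  | h, t, .and φ ψ => sat den eval h t φ ∧ sat den eval h t ψ
  | h, t, .or φ ψ => sat den eval h t φ ∨ sat den eval h t ψ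
  | h, t, .imp φ ψ =>
      (¬ sat den eval h t φ ∨ sat den eval h t ψ) ∧
      (¬ sat den eval t t φ ∨ sat den eval t t ψ)

/-- Basic constraint atoms: a shape together with basic argument terms. -/
abbrev BAtom (A ι T0 : Type) := A × (ι → T0)

/-- Basic formulas (condition-free). -/
abbrev BForm (A ι T0 : Type) := Form (BAtom A ι T0)

/-- A term slot: either a basic term or a conditional term `(s|s':ψ)` whose
condition is a basic formula. -/
inductive Slot (T0 F : Type) : Type
  | basic (b : T0)
  | cond (s s' : T0) (φ : F)

/-- Constraint atoms possibly containing conditional terms. -/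
abbrev CAtom (A ι T0 : Type) := A × (ι → Slot T0 (BForm A ι T0))

/-- Formulas over constraint atoms. -/
abbrev CForm (A ι T0 : Type) := Form (CAtom A ι T0)

/-- HT satisfaction of basic formulas. -/
def satB {X D A ι T0 : Type} (den0 : BAtom A ι T0 → Set (Val X D))
    (h t : Val X D) (φ : BForm A ι T0) : Prop :=
  sat den0 (fun _ _ c => c) h t φ

/-- The df-evaluation of an atom at `⟨h,t⟩`: each conditional term `(s|s':ψ)`
is replaced by `s` if `⟨h,t⟩ ⊨ ψ` and by `s'` otherwise. -/
noncomputable def evalA {X D A ι T0 : Type} (den0 : BAtom A ι T0 → Set (Val X D))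
    (h t : Val X D) (c : CAtom A ι T0) : BAtom A ι T0 :=
  (c.1, fun i =>
    match c.2 i with
    | .basic b => b
    | .cond s s' φ => if satB den0 h t φ then s else s')

/-- HT_C satisfaction under the df-semantics. -/
def satDF {X D A ι T0 : Type} (den0 : BAtom A ι T0 → Set (Val X D))
    (h t : Val X D) (φ : CForm A ι T0) : Prop :=
  sat den0 (evalA den0) h t φ

/-- Generic classical satisfaction, given a classical atom-satisfaction. -/
def satCl {X D C : Type} (holds : Val X D → C → Prop) :
    Val X D → Form C → Prop
  | _, .bot => False
  | v, .atom c => holds v c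
  | v, .and φ ψ => satCl holds v φ ∧ satCl holds v ψ
  | v, .or φ ψ => satCl holds v φ ∨ satCl holds v ψ
  | v, .imp φ ψ => ¬ satCl holds v φ ∨ satCl holds v ψ

/-- Classical satisfaction of a basic atom. -/
def holdsB {X D A ι T0 : Type} (den0 : BAtom A ι T0 → Set (Val X D))
    (v : Val X D) (c : BAtom A ι T0) : Prop :=
  v ∈ den0 c

/-- Classical satisfaction of a constraint atom: `t ⊨_cl c` iff
`t ∈ ⟦eval⟨t,t⟩(c)⟧`. -/
noncomputable def holdsC {X D A ι T0 : Type} (den0 : BAtom A ι T0 → Set (Val X D))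
    (v : Val X D) (c : CAtom A ι T0) : Prop :=
  v ∈ den0 (evalA den0 v v c)

/-- The reduct of a basic formula w.r.t. `t`. -/
noncomputable def reductB {X D A ι T0 : Type} (den0 : BAtom A ι T0 → Set (Val X D))
    (t : Val X D) : BForm A ι T0 → BForm A ι T0
  | .bot => .bot
  | .atom c => if satCl (holdsB den0) t (.atom c) then .atom c else .bot
  | .and φ ψ =>
      if satCl (holdsB den0) t (.and φ ψ) then
        .and (reductB den0 t φ) (reductB den0 t ψ) else .bot
  | .or φ ψ =>
      if satCl (holdsB den0) t (.or φ ψ) then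
        .or (reductB den0 t φ) (reductB den0 t ψ) else .bot
  | .imp φ ψ =>
      if satCl (holdsB den0) t (.imp φ ψ) then
        .imp (reductB den0 t φ) (reductB den0 t ψ) else .bot

/-- The Ferraris-style reduct `φ^t` of a formula with conditional terms:
maximal subformulas classically falsified by `t` become `⊥`, and the
conditions inside satisfied atoms are reduced recursively. -/
noncomputable def reduct {X D A ι T0 : Type} (den0 : BAtom A ι T0 → Set (Val X D))
    (t : Val X D) : CForm A ι T0 → CForm A ι T0
  | .bot => .bot
  | .atom c =>
      if satCl (holdsC den0) t (.atom c) then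
        .atom (c.1, fun i =>
          match c.2 i with
          | .basic b => .basic b
          | .cond s s' φ => .cond s s' (reductB den0 t φ))
      else .bot
  | .and φ ψ =>
      if satCl (holdsC den0) t (.and φ ψ) then
        .and (reduct den0 t φ) (reduct den0 t ψ) else .bot
  | .or φ ψ =>
      if satCl (holdsC den0) t (.or φ ψ) then
        .or (reduct den0 t φ) (reduct den0 t ψ) else .bot
  | .imp φ ψ =>
      if satCl (holdsC den0) t (.imp φ ψ) then
        .imp (reduct den0 t φ) (reduct den0 t ψ) else .bot

/-- Strict inclusion of valuations (strict inclusion of their graphs). -/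
def Val.lt {X D : Type} (v v' : Val X D) : Prop :=
  Val.le v v' ∧ ¬ Val.le v' v


section Aux

variable {X D A ι T0 C C0 : Type}

lemma sat_persist (den : C0 → Set (Val X D)) (eval : Val X D → Val X D → C → C0)
    (h t : Val X D) (φ : Form C) : sat den eval h t φ → sat den eval t t φ := by
  induction φ with
  | bot => exact id
  | atom c => rintro ⟨_, ht⟩; exact ⟨ht, ht⟩
  | and φ ψ ihφ ihψ => rintro ⟨a, b⟩; exact ⟨ihφ a, ihψ b⟩
  | or φ ψ ihφ ihψ => rintro h'; exact h'.imp ihφ ihψ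
  | imp φ ψ _ _ => rintro ⟨_, b⟩; exact ⟨b, b⟩

lemma sat_diag (den : C0 → Set (Val X D)) (eval : Val X D → Val X D → C → C0)
    (v : Val X D) (φ : Form C) :
    sat den eval v v φ ↔ satCl (fun w c => w ∈ den (eval w w c)) v φ := by
  induction φ with
  | bot => simp [sat, satCl]
  | atom c => simp [sat, satCl]
  | and φ ψ ihφ ihψ => simp only [sat, satCl, ihφ, ihψ]
  | or φ ψ ihφ ihψ => simp only [sat, satCl, ihφ, ihψ]
  | imp φ ψ ihφ ihψ => simp only [sat, satCl, ihφ, ihψ]; tauto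

lemma satB_tt (den0 : BAtom A ι T0 → Set (Val X D)) (t : Val X D) (φ : BForm A ι T0) :
    satB den0 t t φ ↔ satCl (holdsB den0) t φ :=
  sat_diag den0 _ t φ

lemma satDF_tt (den0 : BAtom A ι T0 → Set (Val X D)) (t : Val X D) (φ : CForm A ι T0) :
    satDF den0 t t φ ↔ satCl (holdsC den0) t φ :=
  sat_diag den0 _ t φ

lemma reductB_correct (den0 : BAtom A ι T0 → Set (Val X D)) (h t : Val X D)
    (φ : BForm A ι T0) :
    satB den0 h t φ ↔ satCl (holdsB den0) h (reductB den0 t φ) := by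
  induction φ with
  | bot => simp [satB, sat, reductB, satCl]
  | atom c =>
      simp only [reductB]
      by_cases ht : satCl (holdsB den0) t (Form.atom c)
      · rw [if_pos ht]
        simp only [satCl, holdsB] at ht
        simp only [satB, sat, satCl, holdsB]
        tauto
      · rw [if_neg ht]
        simp only [satCl, holdsB] at ht
        simp only [satB, sat, satCl, holdsB]
        tauto
  | and φ ψ ihφ ihψ =>
      simp only [reductB]
      by_cases ht : satCl (holdsB den0) t (Form.and φ ψ)
      · rw [if_pos ht]
        simp only [satB, sat, satCl] at ihφ ihψ ⊢
        tauto
      · rw [if_neg ht]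
        simp only [satCl, iff_false]
        intro hs
        exact ht ((satB_tt den0 t _).mp (sat_persist _ _ h t _ hs))
  | or φ ψ ihφ ihψ =>
      simp only [reductB]
      by_cases ht : satCl (holdsB den0) t (Form.or φ ψ)
      · rw [if_pos ht]
        simp only [satB, sat, satCl] at ihφ ihψ ⊢
        tauto
      · rw [if_neg ht]
        simp only [satCl, iff_false]
        intro hs
        exact ht ((satB_tt den0 t _).mp (sat_persist _ _ h t _ hs))
  | imp φ ψ ihφ ihψ =>
      simp only [reductB]
      by_cases ht : satCl (holdsB den0) t (Form.imp φ ψ)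
      · rw [if_pos ht]
        have htB := (satB_tt den0 t (Form.imp φ ψ)).mpr ht
        simp only [satB, sat] at htB
        simp only [satB, sat, satCl] at ihφ ihψ ⊢
        tauto
      · rw [if_neg ht]
        simp only [satCl, iff_false]
        intro hs
        exact ht ((satB_tt den0 t _).mp (sat_persist _ _ h t _ hs))

lemma reduct_correct (den0 : BAtom A ι T0 → Set (Val X D)) (h t : Val X D)
    (φ : CForm A ι T0) :
    satDF den0 h t φ ↔ satCl (holdsC den0) h (reduct den0 t φ) := by
  induction φ with
  | bot => simp [satDF, sat, reduct, satCl]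
  | atom c =>
      simp only [reduct]
      by_cases ht : satCl (holdsC den0) t (Form.atom c)
      · rw [if_pos ht]
        have key : evalA den0 h h
            ((c.1, fun i =>
              match c.2 i with
              | .basic b => .basic b
              | .cond s s' ψ => .cond s s' (reductB den0 t ψ)) : CAtom A ι T0)
            = evalA den0 h t c := by
          unfold evalA
          refine Prod.ext rfl ?_
          funext i
          cases hc : c.2 i with
          | basic b => simp [hc]
          | cond s s' ψ =>
              simp only [hc]
              have hcond : satB den0 h h (reductB den0 t ψ) ↔ satB den0 h t ψ := by
                rw [satB_tt, ← reductB_correct]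
              rw [hcond]
        simp only [satCl, holdsC] at ht
        simp only [satDF, sat, satCl, holdsC, key]
        tauto
      · rw [if_neg ht]
        simp only [satCl, iff_false]
        intro hs
        exact ht ((satDF_tt den0 t _).mp (sat_persist _ _ h t _ hs))
  | and φ ψ ihφ ihψ =>
      simp only [reduct]
      by_cases ht : satCl (holdsC den0) t (Form.and φ ψ)
      · rw [if_pos ht]
        simp only [satDF, sat, satCl] at ihφ ihψ ⊢
        tauto
      · rw [if_neg ht]
        simp only [satCl, iff_false]
        intro hs
        exact ht ((satDF_tt den0 t _).mp (sat_persist _ _ h t _ hs))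
  | or φ ψ ihφ ihψ =>
      simp only [reduct]
      by_cases ht : satCl (holdsC den0) t (Form.or φ ψ)
      · rw [if_pos ht]
        simp only [satDF, sat, satCl] at ihφ ihψ ⊢
        tauto
      · rw [if_neg ht]
        simp only [satCl, iff_false]
        intro hs
        exact ht ((satDF_tt den0 t _).mp (sat_persist _ _ h t _ hs))
  | imp φ ψ ihφ ihψ =>
      simp only [reduct]
      by_cases ht : satCl (holdsC den0) t (Form.imp φ ψ)
      · rw [if_pos ht]
        have htB := (satDF_tt den0 t (Form.imp φ ψ)).mpr ht
        simp only [satDF, sat] at htB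
        simp only [satDF, sat, satCl] at ihφ ihψ ⊢
        tauto
      · rw [if_neg ht]
        simp only [satCl, iff_false]
        intro hs
        exact ht ((satDF_tt den0 t _).mp (sat_persist _ _ h t _ hs))

end Aux

/-- df-stable models equal F-stable models: a valuation `t` is a df-stable
model of a theory `Γ` (i.e. `⟨t,t⟩ ⊨_df Γ` and no `h ⊂ t` has `⟨h,t⟩ ⊨_df Γ`)
iff `t` is a ⊆-minimal classical model of the reduct `Γ^t = {φ^t : φ ∈ Γ}`. -/
theorem df_stable_iff_F_stable {X D A ι T0 : Type}
    (den0 : BAtom A ι T0 → Set (Val X D))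
    (hmono : ∀ (c : BAtom A ι T0) (v v' : Val X D),
      v ∈ den0 c → Val.le v v' → v' ∈ den0 c)
    (Γ : Set (CForm A ι T0)) (t : Val X D) :
    ((∀ φ ∈ Γ, satDF den0 t t φ) ∧
      ∀ h : Val X D, Val.lt h t → ¬ (∀ φ ∈ Γ, satDF den0 h t φ))
    ↔ ((∀ φ ∈ Γ, satCl (holdsC den0) t (reduct den0 t φ)) ∧
      ∀ h : Val X D, Val.lt h t →
        ¬ (∀ φ ∈ Γ, satCl (holdsC den0) h (reduct den0 t φ))) := by
  simp only [reduct_correct den0 _ t]
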